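/- Let E be a real normed vector space of dimension 2 (finrank ℝ E = 2), let P be a finite nonempty subset of E, and let y ∈ E be any point. Then there exists a minimum spanning tree T of P ∪ {y} with respect to the distance ‖x − z‖ in which y has at most six neighbours. -/

import Mathlib

open scoped BigOperators

noncomputable section

variable {E : Type*} [NormedAddCommGroup E]

/-- The length of an edge (an unordered pair of points): the norm distance
`‖x - z‖` between its endpoints. -/
def edgeLen : Sym2 E → ℝ :=
  Sym2.lift ⟨fun a b => dist a b, fun a b => dist_comm a b⟩

/-- The total length of a graph: the sum of the lengths of its edges. -/
def glength (G : SimpleGraph E) : ℝ := ∑ᶠ e ∈ G.edgeSet, edgeLen e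

/-- `G` is a spanning tree of the point set `V`: all its edges join points of
`V`, it is acyclic, and all points of `V` are pairwise connected in `G`. -/
def IsSpanningTreeOn (V : Set E) (G : SimpleGraph E) : Prop :=
  (∀ ⦃x y : E⦄, G.Adj x y → x ∈ V ∧ y ∈ V) ∧ G.IsAcyclic ∧
    ∀ x ∈ V, ∀ y ∈ V, G.Reachable x y

/-- `G` is a minimum spanning tree of the point set `V`. -/
def IsMSTOn (V : Set E) (G : SimpleGraph E) : Prop :=
  IsSpanningTreeOn V G ∧
    ∀ H : SimpleGraph E, IsSpanningTreeOn V H → glength G ≤ glength H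

/-! Among the minimum spanning trees choose one, `T`, in which `y` has the fewest neighbours.
Take unit vectors `p`, `q` with `‖p - q‖ = 1`; the six cones spanned by consecutive vertices of
the hexagon `p, q, q - p, -p, -q, p - q` cover the plane, and two vectors `x`, `x'` in one of these
cones satisfy `‖x - x'‖ ≤ max ‖x‖ ‖x'‖`. So if `y` had seven neighbours, two of them, `u` and `v`,
would satisfy `‖u - v‖ ≤ ‖v - y‖`, and replacing the edge `y v` of `T` by `u v` would give a
minimum spanning tree in which `y` has fewer neighbours. -/

open SimpleGraph hiding dist dist_comm

section Geometry

def hexagon (p q : E) : Fin 6 → E := ![p, q, q - p, -p, -q, p - q]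

lemma norm_hexagon {p q : E} (hp : ‖p‖ = 1) (hq : ‖q‖ = 1) (hpq : ‖p - q‖ = 1) (i : Fin 6) :
    ‖hexagon p q i‖ = 1 := by
  fin_cases i <;> simp [hexagon, norm_sub_rev q p, *]

lemma norm_hexagon_sub_succ {p q : E} (hp : ‖p‖ = 1) (hq : ‖q‖ = 1) (hpq : ‖p - q‖ = 1)
    (i : Fin 6) : ‖hexagon p q i - hexagon p q (i + 1)‖ = 1 := by
  fin_cases i <;> simp [hexagon, neg_add_eq_sub, sub_sub_eq_add_sub, norm_sub_rev q p, *]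

variable [NormedSpace ℝ E]

lemma norm_sub_le_of_eq_smul_add_smul {x y z : E} (hx : ‖x‖ = 1) (hy : ‖y‖ = 1) (hz : ‖z‖ = 1)
    {a b : ℝ} (ha : 0 ≤ a) (hb : 0 ≤ b) (hxy : y = a • x + b • z) :
    ‖x - y‖ ≤ ‖x - z‖ := by
  have hab : 1 ≤ a + b := by
    have := norm_add_le (a • x) (b • z)
    rw [← hxy, hy, norm_smul_of_nonneg ha, norm_smul_of_nonneg hb, hx, hz] at this
    linarith
  have hc : 0 < a + b := by linarith
  -- `p` is where the segment from `x` to `z` meets the ray through `y`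
  set s := b / (a + b)
  set p : E := (1 - s) • x + s • z
  have hpy : p = (a + b)⁻¹ • y := by
    simp only [p, s, hxy, smul_add, smul_smul]
    congr 2
    · field_simp; ring
    · field_simp
  have hxp : ‖x - p‖ = s * ‖x - z‖ := by
    rw [show x - p = s • (x - z) by module, norm_smul_of_nonneg (by positivity)]
  have hpy' : ‖p - y‖ = 1 - (a + b)⁻¹ := by
    rw [hpy, show (a + b)⁻¹ • y - y = -((1 - (a + b)⁻¹) • y) by module, norm_neg,
      norm_smul_of_nonneg (sub_nonneg.mpr (inv_le_one_of_one_le₀ hab)), hy, mul_one]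
  have hs : s ≤ 1 := div_le_one_of_le₀ (by linarith) hc.le
  have hp : 1 - (1 - s) * ‖x - z‖ ≤ (a + b)⁻¹ := by
    have := norm_sub_norm_le z (z - p)
    rw [sub_sub_cancel, show z - p = (1 - s) • (z - x) by module, hz, hpy,
      norm_smul_of_nonneg (sub_nonneg.mpr hs), norm_smul_of_nonneg (by positivity), hy,
      norm_sub_rev z x] at this
    linarith
  calc ‖x - y‖ ≤ ‖x - p‖ + ‖p - y‖ := norm_sub_le_norm_sub_add_norm_sub x p y
    _ ≤ ‖x - z‖ := by rw [hxp, hpy']; nlinarith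

def InCone (p q w : E) : Prop := ∃ a b : ℝ, 0 ≤ a ∧ 0 ≤ b ∧ w = a • p + b • q

lemma InCone.smul {p q w : E} (h : InCone p q w) {c : ℝ} (hc : 0 ≤ c) : InCone p q (c • w) := by
  obtain ⟨a, b, ha, hb, rfl⟩ := h
  exact ⟨c * a, c * b, mul_nonneg hc ha, mul_nonneg hc hb, by module⟩

lemma InCone.norm_sub_le_of_norm_eq_one {p q x y : E} (hp : ‖p‖ = 1) (hq : ‖q‖ = 1)
    (hx : ‖x‖ = 1) (hy : ‖y‖ = 1) (hcx : InCone p q x) (hcy : InCone p q y) :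
    ‖x - y‖ ≤ ‖p - q‖ := by
  obtain ⟨a, b, ha, hb, rfl⟩ := hcx
  obtain ⟨c, d, hc, hd, rfl⟩ := hcy
  wlog hdet : b * c ≤ a * d generalizing a b c d
  · rw [norm_sub_rev]
    exact this c d hc hd hy a b ha hb hx (by linarith)
  have hxq : ‖a • p + b • q - q‖ ≤ ‖p - q‖ := by
    have := norm_sub_le_of_eq_smul_add_smul hq hx hp hb ha (add_comm _ _)
    rwa [norm_sub_rev, norm_sub_rev q] at this
  rcases ha.eq_or_lt with rfl | ha
  · have hb1 : b = 1 := by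
      rwa [zero_smul, zero_add, norm_smul_of_nonneg hb, hq, mul_one] at hx
    rw [hb1, zero_smul, zero_add, one_smul, norm_sub_rev p q]
    exact norm_sub_le_of_eq_smul_add_smul hq hy hp hd hc (add_comm _ _)
  · -- when `b c ≤ a d`, the vector `y` lies in the cone spanned by `x` and `q`
    refine (norm_sub_le_of_eq_smul_add_smul hx hy hq (div_nonneg hc ha.le)
      (div_nonneg (sub_nonneg.mpr hdet) ha.le) ?_).trans hxq
    rw [smul_add, smul_smul, smul_smul, add_assoc, ← add_smul]
    congr 2
    · field_simp
    · field_simp; ring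

lemma norm_sub_le_of_norm_le_of_norm_normalize_sub_le {x y : E} (hx : x ≠ 0) (hy : y ≠ 0)
    (hxy : ‖x‖ ≤ ‖y‖) (h : ‖‖x‖⁻¹ • x - ‖y‖⁻¹ • y‖ ≤ 1) : ‖x - y‖ ≤ ‖y‖ := by
  have hdecomp : x - y = ‖x‖ • (‖x‖⁻¹ • x - ‖y‖⁻¹ • y) - (‖y‖ - ‖x‖) • (‖y‖⁻¹ • y) := by
    conv_lhs => rw [← smul_inv_smul₀ (norm_ne_zero_iff.mpr hx) x,
      ← smul_inv_smul₀ (norm_ne_zero_iff.mpr hy) y]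
    module
  calc ‖x - y‖ ≤ ‖x‖ * ‖‖x‖⁻¹ • x - ‖y‖⁻¹ • y‖ + (‖y‖ - ‖x‖) * ‖‖y‖⁻¹ • y‖ := by
        rw [hdecomp, ← norm_smul_of_nonneg (norm_nonneg x),
          ← norm_smul_of_nonneg (sub_nonneg.mpr hxy)]
        exact norm_sub_le _ _
    _ ≤ ‖x‖ * 1 + (‖y‖ - ‖x‖) * 1 := by
        have : ‖‖y‖⁻¹ • y‖ = 1 := norm_smul_inv_norm hy
        rw [this]
        gcongr
    _ = ‖y‖ := by ring

lemma InCone.norm_sub_le_max {p q x y : E} (hp : ‖p‖ = 1) (hq : ‖q‖ = 1) (hpq : ‖p - q‖ ≤ 1)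
    (hcx : InCone p q x) (hcy : InCone p q y) : ‖x - y‖ ≤ max ‖x‖ ‖y‖ := by
  wlog hxy : ‖x‖ ≤ ‖y‖ generalizing x y
  · rw [norm_sub_rev, max_comm]
    exact this hcy hcx (le_of_not_ge hxy)
  rcases eq_or_ne x 0 with rfl | hx
  · simp
  rcases eq_or_ne y 0 with rfl | hy
  · simp
  refine (norm_sub_le_of_norm_le_of_norm_normalize_sub_le hx hy hxy ?_).trans (le_max_right _ _)
  exact ((hcx.smul (inv_nonneg.mpr (norm_nonneg x))).norm_sub_le_of_norm_eq_one hp hq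
    (norm_smul_inv_norm hx) (norm_smul_inv_norm hy)
    (hcy.smul (inv_nonneg.mpr (norm_nonneg y)))).trans hpq

lemma exists_norm_eq_one_norm_sub_eq_one (hrank : 1 < Module.rank ℝ E) :
    ∃ p q : E, ‖p‖ = 1 ∧ ‖q‖ = 1 ∧ ‖p - q‖ = 1 := by
  have : Nontrivial E := rank_pos_iff_nontrivial.mp (zero_lt_one.trans hrank)
  obtain ⟨p, hp⟩ := exists_norm_eq E zero_le_one
  have hpS : p ∈ Metric.sphere (0 : E) 1 := by simpa using hp
  have hnegpS : -p ∈ Metric.sphere (0 : E) 1 := by simpa using hp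
  have h1 : (1 : ℝ) ∈ Set.Icc ‖p - p‖ ‖p - -p‖ := by
    rw [sub_self, norm_zero, sub_neg_eq_add, ← two_smul ℝ, norm_smul, hp]
    norm_num
  obtain ⟨q, hqS, hpq⟩ :=
    (isConnected_sphere hrank 0 zero_le_one).isPreconnected.intermediate_value hpS hnegpS
      (continuous_const.sub continuous_id).norm.continuousOn h1
  exact ⟨p, q, hp, by simpa using hqS, hpq⟩

lemma linearIndependent_of_norm_eq_one_of_norm_sub_eq_one {p q : E} (hp : ‖p‖ = 1)
    (hq : ‖q‖ = 1) (hpq : ‖p - q‖ = 1) : LinearIndependent ℝ ![p, q] := by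
  rw [LinearIndependent.pair_iff' (norm_ne_zero_iff.mp (by simp [hp]))]
  rintro a rfl
  rw [norm_smul, hp, mul_one, Real.norm_eq_abs] at hq
  rcases (abs_eq zero_le_one).mp hq with rfl | rfl
  · simp at hpq
  · rw [neg_one_smul, sub_neg_eq_add, ← two_smul ℝ, norm_smul, hp] at hpq
    norm_num at hpq

lemma exists_inCone_hexagon (hdim : Module.finrank ℝ E = 2) {p q : E} (hp : ‖p‖ = 1)
    (hq : ‖q‖ = 1) (hpq : ‖p - q‖ = 1) (w : E) :
    ∃ i : Fin 6, InCone (hexagon p q i) (hexagon p q (i + 1)) w := by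
  have hspan := (linearIndependent_of_norm_eq_one_of_norm_sub_eq_one hp hq hpq
    ).span_eq_top_of_card_eq_finrank (by simp [hdim])
  rw [Matrix.range_cons_cons_empty] at hspan
  obtain ⟨s, t, rfl⟩ := Submodule.mem_span_pair.mp (hspan ▸ Submodule.mem_top : w ∈ _)
  rcases le_total 0 s with hs | hs <;> rcases le_total 0 t with ht | ht
  · exact ⟨0, s, t, hs, ht, rfl⟩
  · rcases le_total 0 (s + t) with hst | hst
    · exact ⟨5, -t, s + t, by linarith, hst, by
        simp only [hexagon, Fin.reduceAdd, Matrix.cons_val]; module⟩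
    · exact ⟨4, -t - s, s, by linarith, hs, by
        simp only [hexagon, Fin.reduceAdd, Matrix.cons_val]; module⟩
  · rcases le_total 0 (s + t) with hst | hst
    · exact ⟨1, s + t, -s, hst, by linarith, by
        simp only [hexagon, Fin.reduceAdd, Matrix.cons_val]; module⟩
    · exact ⟨2, t, -s - t, ht, by linarith, by
        simp only [hexagon, Fin.reduceAdd, Matrix.cons_val]; module⟩
  · exact ⟨3, -s, -t, by linarith, by linarith, by
        simp only [hexagon, Fin.reduceAdd, Matrix.cons_val]; module⟩

theorem exists_ne_dist_le_max_of_six_lt_ncard (hdim : Module.finrank ℝ E = 2) {S : Set E}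
    (hS : 6 < S.ncard) (y : E) :
    ∃ u ∈ S, ∃ v ∈ S, u ≠ v ∧ dist u v ≤ max (dist u y) (dist v y) := by
  have hrank : 1 < Module.rank ℝ E := by
    have : FiniteDimensional ℝ E := .of_finrank_pos (by omega)
    rw [← Module.finrank_eq_rank, hdim]
    norm_num
  obtain ⟨p, q, hp, hq, hpq⟩ := exists_norm_eq_one_norm_sub_eq_one hrank
  choose cone hcone using fun w : E => exists_inCone_hexagon hdim hp hq hpq (w - y)
  obtain ⟨u, hu, v, hv, huv, hcuv⟩ := Set.exists_ne_map_eq_of_ncard_lt_of_maps_to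
    (t := Set.univ) (by simpa using hS) (fun w _ => Set.mem_univ (cone w))
  refine ⟨u, hu, v, hv, huv, ?_⟩
  have hv' := hcone v
  rw [← hcuv] at hv'
  simpa only [dist_eq_norm, sub_sub_sub_cancel_right] using
    (hcone u).norm_sub_le_max (norm_hexagon hp hq hpq _) (norm_hexagon hp hq hpq _)
      (norm_hexagon_sub_succ hp hq hpq _).le hv'

end Geometry

lemma Set.Finite.sym2 {α : Type*} {S : Set α} (hS : S.Finite) : S.sym2.Finite :=
  Set.sym2_eq_mk_image (s := S) ▸ (hS.prod hS).image _

namespace SimpleGraph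

variable {V : Type*} {G H : SimpleGraph V}

lemma Reachable.of_forall_adj {x z : V} (h : ∀ ⦃a b⦄, G.Adj a b → H.Reachable a b)
    (hxz : G.Reachable x z) : H.Reachable x z := by
  obtain ⟨p⟩ := hxz
  induction p with
  | nil => rfl
  | cons hadj _ ih => exact (h hadj).trans ih

lemma edgeSet_subset_sym2 {S : Set V} (h : ∀ ⦃x y⦄, G.Adj x y → x ∈ S ∧ y ∈ S) :
    G.edgeSet ⊆ S.sym2 := by
  rintro ⟨a, b⟩ he
  exact h he

lemma finite_setOf_forall_adj_mem {S : Set V} (hS : S.Finite) :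
    {G : SimpleGraph V | ∀ ⦃x y⦄, G.Adj x y → x ∈ S ∧ y ∈ S}.Finite :=
  (hS.sym2.finite_subsets.preimage edgeSet_injective.injOn).subset
    fun _ hG => edgeSet_subset_sym2 hG

variable {y u v : V}

lemma deleteEdges_adj_of_adj_of_ne (hu : G.Adj y u) (huv : u ≠ v) :
    (G.deleteEdges {s(y, v)}).Adj y u := by
  simp [hu, huv, hu.ne']

lemma IsAcyclic.not_reachable_deleteEdges (hG : G.IsAcyclic) (hu : G.Adj y u) (hv : G.Adj y v)
    (huv : u ≠ v) : ¬(G.deleteEdges {s(y, v)}).Reachable u v := fun h =>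
  isAcyclic_iff_forall_adj_isBridge.mp hG hv
    ((deleteEdges_adj_of_adj_of_ne hu huv).reachable.trans h)

lemma IsAcyclic.deleteEdges_sup_edge (hG : G.IsAcyclic) (hu : G.Adj y u) (hv : G.Adj y v)
    (huv : u ≠ v) : (G.deleteEdges {s(y, v)} ⊔ edge u v).IsAcyclic :=
  (hG.anti (deleteEdges_le _)).sup_edge_of_not_reachable (hG.not_reachable_deleteEdges hu hv huv)

lemma Reachable.deleteEdges_sup_edge (hu : G.Adj y u) (huv : u ≠ v) {x z : V}
    (h : G.Reachable x z) : (G.deleteEdges {s(y, v)} ⊔ edge u v).Reachable x z := by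
  refine h.of_forall_adj fun a b hab => ?_
  by_cases he : s(a, b) = s(y, v)
  · have hyv : (G.deleteEdges {s(y, v)} ⊔ edge u v).Reachable y v :=
      (Adj.reachable (Or.inl (deleteEdges_adj_of_adj_of_ne hu huv))).trans
        (Adj.reachable (Or.inr (by simp [edge_adj, huv])))
    rcases Sym2.eq_iff.mp he with ⟨rfl, rfl⟩ | ⟨rfl, rfl⟩
    exacts [hyv, hyv.symm]
  · exact Adj.reachable (Or.inl ((deleteEdges_adj ..).mpr ⟨hab, he⟩))

lemma neighborSet_deleteEdges_sup_edge (hyu : y ≠ u) (hyv : y ≠ v) :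
    (G.deleteEdges {s(y, v)} ⊔ edge u v).neighborSet y = G.neighborSet y \ {v} := by
  ext z
  simp [edge_adj, hyu, hyv]

end SimpleGraph

section SpanningTree

variable {α : Type*} {V : Set α} {T : SimpleGraph α} {y u v : α}

lemma IsSpanningTreeOn.edgeSet_finite (hT : IsSpanningTreeOn V T) (hV : V.Finite) :
    T.edgeSet.Finite :=
  hV.sym2.subset (edgeSet_subset_sym2 hT.1)

lemma IsSpanningTreeOn.deleteEdges_sup_edge (hT : IsSpanningTreeOn V T) (hu : T.Adj y u)
    (hv : T.Adj y v) (huv : u ≠ v) : IsSpanningTreeOn V (T.deleteEdges {s(y, v)} ⊔ edge u v) := by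
  obtain ⟨hTV, hT, hTr⟩ := hT
  refine ⟨fun a b hab => ?_, hT.deleteEdges_sup_edge hu hv huv,
    fun a ha b hb => (hTr a ha b hb).deleteEdges_sup_edge hu huv⟩
  rcases hab with hab | hab
  · exact hTV (deleteEdges_le _ hab)
  · rcases ((edge_adj _ _ _ _).mp hab).1 with ⟨rfl, rfl⟩ | ⟨rfl, rfl⟩
    exacts [⟨(hTV hu).2, (hTV hv).2⟩, ⟨(hTV hv).2, (hTV hu).2⟩]

lemma exists_isSpanningTreeOn (V : Set α) : ∃ T, IsSpanningTreeOn V T := by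
  obtain ⟨F, hFG, hF, hFr⟩ :=
    (SimpleGraph.fromRel fun x z : α => x ∈ V ∧ z ∈ V).exists_isAcyclic_reachable_eq_le
  refine ⟨F, fun x z h => ?_, hF, fun x hx z hz => ?_⟩
  · obtain ⟨-, h | h⟩ := hFG h
    exacts [h, h.symm]
  · rw [hFr]
    rcases eq_or_ne x z with rfl | hxz
    · rfl
    · exact Adj.reachable ⟨hxz, Or.inl ⟨hx, hz⟩⟩

end SpanningTree

section MinimumSpanningTree

@[simp]
lemma edgeLen_mk (a b : E) : edgeLen s(a, b) = dist a b := rfl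

variable {V : Set E} {G T : SimpleGraph E} {u v y : E}

lemma glength_sup_edge (hG : G.edgeSet.Finite) (huv : u ≠ v) (h : ¬G.Adj u v) :
    glength (G ⊔ edge u v) = dist u v + glength G := by
  have hedges : (G ⊔ edge u v).edgeSet = insert s(u, v) G.edgeSet := by
    ext ⟨a, b⟩
    simp only [mem_edgeSet, sup_adj, edge_adj, Set.mem_insert_iff, Sym2.eq_iff]
    grind [Adj.ne]
  rw [glength, glength, hedges, finsum_mem_insert _ (show s(u, v) ∉ G.edgeSet from h) hG,
    edgeLen_mk]

lemma dist_add_glength_deleteEdges (hG : G.edgeSet.Finite) (h : G.Adj u v) :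
    dist u v + glength (G.deleteEdges {s(u, v)}) = glength G := by
  rw [glength, glength, edgeSet_deleteEdges, ← edgeLen_mk,
    ← finsum_mem_insert edgeLen (Set.notMem_sdiff_of_mem (Set.mem_singleton _)) hG.sdiff,
    Set.insert_sdiff_singleton, Set.insert_eq_of_mem (show s(u, v) ∈ G.edgeSet from h)]

lemma IsSpanningTreeOn.glength_deleteEdges_sup_edge (hT : IsSpanningTreeOn V T) (hV : V.Finite)
    (hu : T.Adj y u) (hv : T.Adj y v) (huv : u ≠ v) :
    glength (T.deleteEdges {s(y, v)} ⊔ edge u v) + dist y v = glength T + dist u v := by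
  have hfin := hT.edgeSet_finite hV
  rw [glength_sup_edge (hfin.subset (edgeSet_mono (deleteEdges_le _))) huv
    fun h => hT.2.1.not_reachable_deleteEdges hu hv huv h.reachable,
    ← dist_add_glength_deleteEdges hfin hv]
  ring

lemma exists_isMSTOn (hV : V.Finite) : ∃ T, IsMSTOn V T := by
  obtain ⟨T, hT, hmin⟩ := Set.exists_min_image {T | IsSpanningTreeOn V T} glength
    ((finite_setOf_forall_adj_mem hV).subset fun _ hT => hT.1) (exists_isSpanningTreeOn V)
  exact ⟨T, hT, hmin⟩

lemma IsMSTOn.exists_ncard_neighborSet_lt (hT : IsMSTOn V T) (hV : V.Finite) (hu : T.Adj y u)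
    (hv : T.Adj y v) (huv : u ≠ v) (hdist : dist u v ≤ max (dist u y) (dist v y)) :
    ∃ T', IsMSTOn V T' ∧ (T'.neighborSet y).ncard < (T.neighborSet y).ncard := by
  wlog hle : dist u y ≤ dist v y generalizing u v
  · exact this hv hu huv.symm (by rwa [dist_comm, max_comm]) (le_of_not_ge hle)
  -- exchange the edge `y v` for the edge `u v`, which is no longer
  refine ⟨_, ⟨hT.1.deleteEdges_sup_edge hu hv huv, fun H hH => ?_⟩, ?_⟩
  · have := hT.1.glength_deleteEdges_sup_edge hV hu hv huv
    have := hT.2 H hH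
    rw [max_eq_right hle, dist_comm v] at hdist
    linarith
  · rw [neighborSet_deleteEdges_sup_edge hu.ne hv.ne]
    exact Set.ncard_sdiff_singleton_lt_of_mem hv (hV.subset fun _ hz => (hT.1.1 hz).2)

end MinimumSpanningTree

theorem stmt16_general (E : Type*) [NormedAddCommGroup E] [NormedSpace ℝ E]
    (hdim : Module.finrank ℝ E = 2)
    (P : Finset E) (y : E) :
    ∃ T : SimpleGraph E, IsMSTOn (insert y ↑P) T ∧ (T.neighborSet y).ncard ≤ 6 := by
  set V : Set E := insert y ↑P
  have hV : V.Finite := P.finite_toSet.insert y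
  obtain ⟨T, hT, hmin⟩ := Set.exists_min_image {T | IsMSTOn V T}
    (fun T => (T.neighborSet y).ncard)
    ((finite_setOf_forall_adj_mem hV).subset fun _ hT => hT.1.1) (exists_isMSTOn hV)
  refine ⟨T, hT, not_lt.mp fun h6 => ?_⟩
  obtain ⟨u, hu, v, hv, huv, hdist⟩ := exists_ne_dist_le_max_of_six_lt_ncard hdim h6 y
  obtain ⟨T', hT', hlt⟩ := hT.exists_ncard_neighborSet_lt hV hu hv huv hdist
  exact (hmin T' hT').not_gt hlt

theorem stmt16 (E : Type*) [NormedAddCommGroup E] [NormedSpace ℝ E]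
    (hdim : Module.finrank ℝ E = 2)
    (P : Finset E) (hP : P.Nonempty) (y : E) :
    ∃ T : SimpleGraph E, IsMSTOn (insert y ↑P) T ∧ (T.neighborSet y).ncard ≤ 6 :=
  stmt16_general E hdim P y

end
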